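/- arXiv:1610.04819 — 2 statements merged into one kernel-verified Lean document; each statement's English description precedes it below -/
import Mathlib

section
/- Let μ ∈ Xf be n-deep in C₀, let s, σ ∈ Wf, ν ∈ Xf, and set μ′ := σ(μ + η) + pν − σ s π(σ)^{−1} π(ν) − η. If μ′ ∈ X₁ (p-restricted), then |⟨ν_j, α^∨⟩| ≤ n − 1 for all j and all coroots α^∨, the weight μ′ lies in the p-alcove (t_ν σ) · C₀, and the p-alcove (t_ν σ) · C₀ is p-restricted. -/
/-!
Common setup: the extended affine Weyl group of `GL_n` (f-fold product), its dot
action on `(ℝ^n)^f`, p-alcoves, lengths, Bruhat orders (dominant and antidominant),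
the up (↑) order, admissible sets, and the combinatorics of lowest alcove
presentations, following Le–Le Hung–Levin, "Weight elimination in Serre-type
conjectures".
-/

noncomputable section

namespace LLLSerre

open scoped BigOperators

/-- `η₀ = (n-1, n-2, …, 1, 0)`. -/
def eta0 (n : ℕ) : Fin n → ℤ := fun i => (n : ℤ) - 1 - (i : ℤ)

/-- The action of a permutation on a vector: `(σ x) i = x (σ⁻¹ i)`. -/
def permAct {n : ℕ} {α : Type*} (σ : Equiv.Perm (Fin n)) (x : Fin n → α) : Fin n → α :=
  fun i => x (σ⁻¹ i)

/-- The weight lattice `Xf = (ℤ^n)^f`. -/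
abbrev Xf (n f : ℕ) := Fin f → Fin n → ℤ

/-- The f-fold product of Weyl groups `Wf = (S_n)^f`. -/
abbrev WfG (n f : ℕ) := Fin f → Equiv.Perm (Fin n)

/-- Points of `(ℝ^n)^f`. -/
abbrev RPt (n f : ℕ) := Fin f → Fin n → ℝ

/-- The extended affine Weyl group `Wtf = (X ⋊ W)^f`; the pair `(w, ν)` represents
`w t_ν`. -/
structure Wtf (n f : ℕ) where
  w : WfG n f
  t : Xf n f

/-- Multiplication in `Wtf`: `(w₁ t_{ν₁})(w₂ t_{ν₂}) = w₁w₂ t_{ν₂ + w₂⁻¹(ν₁)}`. -/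
def Wtf.mul {n f : ℕ} (a b : Wtf n f) : Wtf n f :=
  ⟨fun j => a.w j * b.w j, fun j => b.t j + permAct (b.w j)⁻¹ (a.t j)⟩

/-- Inversion in `Wtf`: `(w t_ν)⁻¹ = w⁻¹ t_{-w(ν)}`. -/
def Wtf.inv {n f : ℕ} (a : Wtf n f) : Wtf n f :=
  ⟨fun j => (a.w j)⁻¹, fun j => -(permAct (a.w j) (a.t j))⟩

/-- Embedding of the finite Weyl group `Wf` in `Wtf`. -/
def ofW {n f : ℕ} (w : WfG n f) : Wtf n f := ⟨w, fun _ _ => 0⟩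

/-- The translation `t_ν ∈ Wtf`. -/
def transl {n f : ℕ} (ν : Xf n f) : Wtf n f := ⟨fun _ => 1, ν⟩

/-- `η = (η₀, …, η₀) ∈ Xf`. -/
def etaf (n f : ℕ) : Xf n f := fun _ => eta0 n

/-- The longest element `w₀ ∈ Wf`. -/
def w0f (n f : ℕ) : WfG n f := fun _ => Fin.revPerm

/-- `w₀` as an element of `Wtf`. -/
def w0Elt (n f : ℕ) : Wtf n f := ofW (w0f n f)

/-- `w̃_h = w₀ t_{-η} ∈ Wtf`. -/
def whElt (n f : ℕ) : Wtf n f := ⟨w0f n f, fun _ i => -(eta0 n i)⟩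

/-- The dot action of `Wtf` on `(ℝ^n)^f`: `(w t_ν) · x = w(x + η + pν) − η`. -/
def dotR {n f : ℕ} (p : ℕ) (a : Wtf n f) (x : RPt n f) : RPt n f :=
  fun j i =>
    (x j ((a.w j)⁻¹ i) + ((eta0 n ((a.w j)⁻¹ i) : ℤ) : ℝ)
      + (p : ℝ) * ((a.t j ((a.w j)⁻¹ i) : ℤ) : ℝ)) - ((eta0 n i : ℤ) : ℝ)

/-- The dot action of `Wtf` on integral weights. -/
def dotZ {n f : ℕ} (p : ℕ) (a : Wtf n f) (lam : Xf n f) : Xf n f :=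
  fun j i =>
    (lam j ((a.w j)⁻¹ i) + eta0 n ((a.w j)⁻¹ i) + (p : ℤ) * a.t j ((a.w j)⁻¹ i)) - eta0 n i

/-- `⟨x_j + η₀, α_{ik}^∨⟩` for a real point `x`. -/
def prR {n f : ℕ} (x : RPt n f) (j : Fin f) (i k : Fin n) : ℝ :=
  (x j i + ((eta0 n i : ℤ) : ℝ)) - (x j k + ((eta0 n k : ℤ) : ℝ))

/-- `⟨λ_j + η₀, α_{ik}^∨⟩` for a weight `λ`. -/
def prZ {n f : ℕ} (lam : Xf n f) (j : Fin f) (i k : Fin n) : ℤ :=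
  (lam j i + eta0 n i) - (lam j k + eta0 n k)

/-- A point is (p-)regular if it lies on none of the affine hyperplanes
`⟨x_j + η₀, α^∨⟩ = pm`. -/
def regular {n f : ℕ} (p : ℕ) (x : RPt n f) : Prop :=
  ∀ (j : Fin f) (i k : Fin n) (m : ℤ), i < k → prR x j i k ≠ (p : ℝ) * (m : ℝ)

/-- Two regular points lie in the same p-alcove (same side of every hyperplane). -/
def sameAlcove {n f : ℕ} (p : ℕ) (x y : RPt n f) : Prop :=
  regular p x ∧ regular p y ∧
    ∀ (j : Fin f) (i k : Fin n) (m : ℤ), i < k →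
      (prR x j i k < (p : ℝ) * (m : ℝ) ↔ prR y j i k < (p : ℝ) * (m : ℝ))

/-- The root `α_{ik} = e_i - e_k` as a real vector. -/
def rootR {n : ℕ} (i k i' : Fin n) : ℝ :=
  (if i' = i then (1 : ℝ) else 0) - (if i' = k then (1 : ℝ) else 0)

/-- The affine reflection across the hyperplane `⟨x_j + η₀, α_{ik}^∨⟩ = pm`:
it replaces `x_j` by `x_j − (⟨x_j + η₀, α_{ik}^∨⟩ − pm) α_{ik}`. -/
def reflPt {n f : ℕ} (p : ℕ) (j : Fin f) (i k : Fin n) (m : ℤ) (x : RPt n f) : RPt n f :=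
  fun j' i' =>
    if j' = j then x j' i' - (prR x j i k - (p : ℝ) * (m : ℝ)) * rootR i k i' else x j' i'

/-- The origin, a point of the base alcove `C₀` (when `p > n`). -/
def basePt (n f : ℕ) : RPt n f := fun _ _ => 0

/-- The hyperplane indexed by `(j, i, k, m)` separates `x` from `y`. -/
def separates {n f : ℕ} (p : ℕ) (x y : RPt n f) (j : Fin f) (i k : Fin n) (m : ℤ) : Prop :=
  (prR x j i k < (p : ℝ) * (m : ℝ) ∧ (p : ℝ) * (m : ℝ) < prR y j i k) ∨
  (prR y j i k < (p : ℝ) * (m : ℝ) ∧ (p : ℝ) * (m : ℝ) < prR x j i k)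

/-- The length of `a ∈ Wtf` measured from the alcove of the base point `x`:
the number of hyperplanes separating the alcove of `x` from its image under `a`. -/
def lenFrom {n f : ℕ} (p : ℕ) (x : RPt n f) (a : Wtf n f) : ℕ :=
  Set.ncard {q : Fin f × Fin n × Fin n × ℤ |
    q.2.1 < q.2.2.1 ∧ separates p x (dotR p a x) q.1 q.2.1 q.2.2.1 q.2.2.2}

/-- Length relative to the dominant base alcove `C₀`. -/
def len {n f : ℕ} (p : ℕ) (a : Wtf n f) : ℕ := lenFrom p (basePt n f) a

/-- A point of the antidominant base alcove `w₀ · C₀`. -/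
def antiBasePt (n f p : ℕ) : RPt n f := dotR p (w0Elt n f) (basePt n f)

/-- Length relative to the antidominant base alcove `w₀ · C₀`. -/
def lenV {n f : ℕ} (p : ℕ) (a : Wtf n f) : ℕ := lenFrom p (antiBasePt n f p) a

/-- The affine Weyl group `Waf = (Λ_R ⋊ W)^f ⊆ Wtf`. -/
def Waf (n f : ℕ) : Set (Wtf n f) := {a | ∀ j, (∑ i, a.t j i) = 0}

/-- The stabilizer `Ωf` of the dominant base alcove `C₀`. -/
def Omegaf (n f p : ℕ) : Set (Wtf n f) :=
  {a | sameAlcove p (basePt n f) (dotR p a (basePt n f))}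

/-- The stabilizer of the antidominant base alcove `w₀ · C₀`. -/
def OmegaV (n f p : ℕ) : Set (Wtf n f) :=
  {a | sameAlcove p (antiBasePt n f p) (dotR p a (antiBasePt n f p))}

/-- `a ∈ Wtf` acts via the dot action as the affine reflection in a single hyperplane. -/
def isRefl {n f : ℕ} (p : ℕ) (a : Wtf n f) : Prop :=
  ∃ (j : Fin f) (i k : Fin n) (m : ℤ), i < k ∧ ∀ x, dotR p a x = reflPt p j i k m x

/-- One step of the Bruhat order (relative to the base point `x`):
`u < r u` for `r` a reflection with `ℓ(u) < ℓ(r u)`. -/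
def bruhatStepFrom {n f : ℕ} (p : ℕ) (x : RPt n f) (u v : Wtf n f) : Prop :=
  ∃ r, isRefl p r ∧ v = Wtf.mul r u ∧ lenFrom p x u < lenFrom p x v

/-- The Bruhat order on `Wtf` relative to the base alcove with representative
point `x` and stabilizer `Ω`: on `Waf` it is generated by the reflection steps,
and is extended to `Wtf` by `u ω ≤ v ω` for `u ≤ v` in `Waf`, `ω ∈ Ω`. -/
def bruhatLEFrom {n f : ℕ} (p : ℕ) (x : RPt n f) (Om : Set (Wtf n f)) (a b : Wtf n f) : Prop :=
  ∃ u v ω, u ∈ Waf n f ∧ v ∈ Waf n f ∧ ω ∈ Om ∧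
    a = Wtf.mul u ω ∧ b = Wtf.mul v ω ∧
    Relation.ReflTransGen (bruhatStepFrom p x) u v

/-- The Bruhat order on `Wtf` relative to the dominant base alcove. -/
def bruhatLE {n f : ℕ} (p : ℕ) (a b : Wtf n f) : Prop :=
  bruhatLEFrom p (basePt n f) (Omegaf n f p) a b

/-- The Bruhat order on `Wtf` relative to the antidominant base alcove. -/
def bruhatLEV {n f : ℕ} (p : ℕ) (a b : Wtf n f) : Prop :=
  bruhatLEFrom p (antiBasePt n f p) (OmegaV n f p) a b

/-- The admissible set `Adm(λ) = {w̃ : w̃ ≤ t_{σ(λ)} for some σ ∈ Wf}` (dominant order). -/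
def Adm {n f : ℕ} (p : ℕ) (lam : Xf n f) : Set (Wtf n f) :=
  {a | ∃ σ : WfG n f, bruhatLE p a (transl (fun j => permAct (σ j) (lam j)))}

/-- The admissible set `Adm∨(λ)` (antidominant order). -/
def AdmV {n f : ℕ} (p : ℕ) (lam : Xf n f) : Set (Wtf n f) :=
  {a | ∃ σ : WfG n f, bruhatLEV p a (transl (fun j => permAct (σ j) (lam j)))}

/-- The anti-automorphism `w̃ = w t_ν ↦ w̃* = t_{ν*} w*` of `Wtf`, where
`(w*)_j = (w_{f-1-j})⁻¹` and `(ν*)_j = ν_{f-1-j}`. -/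
def wstar {n f : ℕ} (a : Wtf n f) : Wtf n f :=
  ⟨fun j => (a.w (Fin.rev j))⁻¹, fun j => permAct (a.w (Fin.rev j)) (a.t (Fin.rev j))⟩

/-- `ν ↦ ν*` on weights: `(ν*)_j = ν_{f-1-j}`. -/
def xstar {n f : ℕ} (lam : Xf n f) : Xf n f := fun j => lam (Fin.rev j)

/-- The cyclic shift `π` on weights: `(πν)_j = ν_{j-1}`. -/
def sh {n f : ℕ} (ν : Xf n f) : Xf n f := fun j => ν ((finRotate f)⁻¹ j)

/-- The cyclic shift `π` on `Wf`: `(πσ)_j = σ_{j-1}`. -/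
def shW {n f : ℕ} (σ : WfG n f) : WfG n f := fun j => σ ((finRotate f)⁻¹ j)

/-- The `Wf`-part of `^(ν,σ)(w, μ)`, namely `σ w π(σ)⁻¹`. -/
def conjW {n f : ℕ} (σ w : WfG n f) : WfG n f := fun j => σ j * w j * (shW σ j)⁻¹

/-- The `Xf`-part of `^(ν,σ)(w, μ)`, namely `σ(μ) + pν − σwπ(σ)⁻¹ π(ν)`. -/
def conjX {n f : ℕ} (p : ℕ) (ν : Xf n f) (σ w : WfG n f) (μ : Xf n f) : Xf n f :=
  fun j i => permAct (σ j) (μ j) i + (p : ℤ) * ν j i - permAct (conjW σ w j) (sh ν j) i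

/-- `(w, μ) ∼ (w', μ')`: `(w', μ') = ^(ν,σ)(w, μ)` for some `(ν, σ)`. -/
def pairEquiv {n f : ℕ} (p : ℕ) (w : WfG n f) (μ : Xf n f) (w' : WfG n f) (μ' : Xf n f) : Prop :=
  ∃ (ν : Xf n f) (σ : WfG n f), w' = conjW σ w ∧ μ' = conjX p ν σ w μ

/-- `λ` is m-deep in the base alcove `C₀`:
`m < ⟨λ_j + η₀, α^∨⟩ < p − m` for all `j` and positive coroots `α^∨`. -/
def deep {n f : ℕ} (p m : ℕ) (lam : Xf n f) : Prop :=
  ∀ (j : Fin f) (i k : Fin n), i < k →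
    (m : ℤ) < prZ lam j i k ∧ prZ lam j i k < (p : ℤ) - (m : ℤ)

/-- `λ` lies m-deep in its own p-alcove. -/
def deepInAlcove {n f : ℕ} (p m : ℕ) (lam : Xf n f) : Prop :=
  ∀ (j : Fin f) (i k : Fin n), i < k →
    ∃ N : ℤ, (p : ℤ) * N + (m : ℤ) < prZ lam j i k ∧
      prZ lam j i k < (p : ℤ) * (N + 1) - (m : ℤ)

/-- The p-restricted weights `X₁`. -/
def X1 (n f p : ℕ) : Set (Xf n f) :=
  {lam | ∀ (j : Fin f) (i : Fin n) (h : (i : ℕ) + 1 < n),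
    0 ≤ lam j i - lam j ⟨(i : ℕ) + 1, h⟩ ∧ lam j i - lam j ⟨(i : ℕ) + 1, h⟩ ≤ (p : ℤ) - 1}

/-- `X⁰`: weights pairing to 0 with every coroot. -/
def X0 (n f : ℕ) : Set (Xf n f) := {lam | ∀ (j : Fin f) (i k : Fin n), lam j i = lam j k}

/-- The alcove of the regular point `x` is dominant. -/
def dominantPt {n f : ℕ} (x : RPt n f) : Prop :=
  ∀ (j : Fin f) (i k : Fin n), i < k → 0 < prR x j i k

/-- The alcove of the regular point `x` is p-restricted. -/
def restrictedPt {n f : ℕ} (p : ℕ) (x : RPt n f) : Prop :=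
  ∀ (j : Fin f) (i : Fin n) (h : (i : ℕ) + 1 < n),
    0 < prR x j i ⟨(i : ℕ) + 1, h⟩ ∧ prR x j i ⟨(i : ℕ) + 1, h⟩ < (p : ℝ)

/-- `Wtf⁺`: the elements sending `C₀` to a dominant alcove under the dot action. -/
def WtfPlus (n f p : ℕ) : Set (Wtf n f) := {a | dominantPt (dotR p a (basePt n f))}

/-- One step of the up (↑) order on alcoves, via representative points:
stay in the same alcove, or apply a reflection across a hyperplane lying above. -/
def upStep {n f : ℕ} (p : ℕ) (x y : RPt n f) : Prop :=
  sameAlcove p x y ∨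
    ∃ (j : Fin f) (i k : Fin n) (m : ℤ), i < k ∧ prR x j i k < (p : ℝ) * (m : ℝ) ∧
      y = reflPt p j i k m x

/-- The up (↑) order on p-alcoves, via representative points. -/
def alcoveLE {n f : ℕ} (p : ℕ) (x y : RPt n f) : Prop :=
  Relation.ReflTransGen (upStep p) x y

/-- `w̃₁ ↑ w̃₂` on `Wtf`: `w̃₁ · C₀ ↑ w̃₂ · C₀` and `w̃₁, w̃₂` in the same right
`Waf`-coset. -/
def upOrd {n f : ℕ} (p : ℕ) (a b : Wtf n f) : Prop :=
  alcoveLE p (dotR p a (basePt n f)) (dotR p b (basePt n f)) ∧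
    Wtf.mul a (Wtf.inv b) ∈ Waf n f

/-- Realification of an integral weight. -/
def toR {n f : ℕ} (lam : Xf n f) : RPt n f := fun j i => ((lam j i : ℤ) : ℝ)

/-- The `Wf`-orbit of a point of `(ℝ^n)^f`. -/
def orbitR {n f : ℕ} (y : RPt n f) : Set (RPt n f) :=
  Set.range fun σ : WfG n f => fun j => permAct (σ j) (y j)

end LLLSerre

namespace LLLSerre

private lemma lt_iff_pos (p u D m : ℤ) (hu : 0 < u) (hup : u < p) :
    p * D + u < p * m ↔ D < m := by
  have hp0 : (0:ℤ) < p := lt_trans hu hup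
  constructor
  · intro h
    by_contra hc
    push_neg at hc
    have h2 : p * m ≤ p * D := mul_le_mul_of_nonneg_left hc hp0.le
    linarith
  · intro h
    have h2 : p * (D + 1) ≤ p * m := mul_le_mul_of_nonneg_left (by omega) hp0.le
    linarith

private lemma int_ne (p u D : ℤ) (h : (0 < u ∧ u < p) ∨ (-p < u ∧ u < 0)) (m : ℤ) :
    p * D + u ≠ p * m := by
  intro hEq
  rcases h with ⟨h1, h2⟩ | ⟨h1, h2⟩
  · have hd : p ∣ u := ⟨m - D, by linarith [mul_sub p m D]⟩
    have := Int.le_of_dvd h1 hd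
    linarith
  · have hd : p ∣ (-u) := ⟨D - m, by linarith [mul_sub p D m]⟩
    have := Int.le_of_dvd (by linarith) hd
    linarith

private lemma int_iff (p u v D m : ℤ)
    (h : (0 < u ∧ u < p ∧ 0 < v ∧ v < p) ∨ (-p < u ∧ u < 0 ∧ -p < v ∧ v < 0)) :
    (p * D + u < p * m ↔ p * D + v < p * m) := by
  rcases h with ⟨h1, h2, h3, h4⟩ | ⟨h1, h2, h3, h4⟩
  · rw [lt_iff_pos p u D m h1 h2, lt_iff_pos p v D m h3 h4]
  · have e1 : p * D + u = p * (D - 1) + (u + p) := by ring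
    have e2 : p * D + v = p * (D - 1) + (v + p) := by ring
    rw [e1, e2, lt_iff_pos p (u + p) (D - 1) m (by linarith) (by linarith),
      lt_iff_pos p (v + p) (D - 1) m (by linarith) (by linarith)]

private lemma real_ne (p : ℕ) (U m : ℤ) (h : U ≠ (p : ℤ) * m) :
    ((U : ℤ) : ℝ) ≠ (p : ℝ) * ((m : ℤ) : ℝ) := by
  intro hEq
  exact h (by exact_mod_cast hEq)

private lemma real_lt_iff (p : ℕ) (U V m : ℤ) (h : U < (p : ℤ) * m ↔ V < (p : ℤ) * m) :
    (((U : ℤ) : ℝ) < (p : ℝ) * ((m : ℤ) : ℝ) ↔ ((V : ℤ) : ℝ) < (p : ℝ) * ((m : ℤ) : ℝ)) := by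
  have e : (p : ℝ) * ((m : ℤ) : ℝ) = (((p : ℤ) * m : ℤ) : ℝ) := by push_cast; ring
  rw [e, Int.cast_lt, Int.cast_lt]
  exact h

private lemma prZ_split {n f : ℕ} (lam : Xf n f) (j : Fin f) (i k k' : Fin n) :
    prZ lam j i k = prZ lam j i k' + prZ lam j k' k := by
  simp only [prZ]; ring

private lemma telescope {n f : ℕ} (p : ℤ) (lam : Xf n f) (j : Fin f)
    (hc : ∀ (i : Fin n) (h : (i : ℕ) + 1 < n),
      1 ≤ prZ lam j i ⟨(i : ℕ) + 1, h⟩ ∧ prZ lam j i ⟨(i : ℕ) + 1, h⟩ ≤ p) :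
    ∀ (i k : Fin n), i < k →
      ((k : ℕ) : ℤ) - ((i : ℕ) : ℤ) ≤ prZ lam j i k ∧
        prZ lam j i k ≤ (((k : ℕ) : ℤ) - ((i : ℕ) : ℤ)) * p := by
  suffices H : ∀ d : ℕ, ∀ i k : Fin n, (k : ℕ) = (i : ℕ) + (d + 1) →
      ((d : ℤ) + 1) ≤ prZ lam j i k ∧ prZ lam j i k ≤ ((d : ℤ) + 1) * p by
    intro i k hik
    have hik' : (i : ℕ) < (k : ℕ) := hik
    have hd : (k : ℕ) = (i : ℕ) + (((k : ℕ) - (i : ℕ) - 1) + 1) := by omega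
    have hcast : ((((k : ℕ) - (i : ℕ) - 1 : ℕ)) : ℤ) + 1 = ((k : ℕ) : ℤ) - ((i : ℕ) : ℤ) := by
      omega
    have := H ((k : ℕ) - (i : ℕ) - 1) i k hd
    rw [← hcast]
    exact this
  intro d
  induction d with
  | zero =>
    intro i k hk
    have h' : (i : ℕ) + 1 < n := by have := k.isLt; omega
    have hkk : k = ⟨(i : ℕ) + 1, h'⟩ := Fin.ext (by simp; omega)
    rw [hkk]
    have := hc i h'
    constructor
    · push_cast; linarith [this.1]
    · push_cast; linarith [this.2]
  | succ d ih =>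
    intro i k hk
    have hik : (i : ℕ) + (d + 1) < n := by have := k.isLt; omega
    set k' : Fin n := ⟨(i : ℕ) + (d + 1), hik⟩ with hk'def
    have h1 := ih i k' rfl
    have h2' : ((k' : ℕ)) + 1 < n := by have := k.isLt; simp [hk'def]; omega
    have h2 := hc k' h2'
    have hkk : k = ⟨((k' : ℕ)) + 1, h2'⟩ := Fin.ext (by simp [hk'def]; omega)
    rw [← hkk] at h2
    have hsplit := prZ_split lam j i k k'
    constructor
    · push_cast; linarith [h1.1, h2.1]
    · push_cast; linarith [h1.2, h2.2]
private lemma prR_toR {n f : ℕ} (lam : Xf n f) (j : Fin f) (i k : Fin n) :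
    prR (toR lam) j i k = ((prZ lam j i k : ℤ) : ℝ) := by
  simp only [prR, toR, prZ]
  push_cast
  ring

private lemma prR_y {n f : ℕ} (p : ℕ) (ν : Xf n f) (σ : WfG n f) (j : Fin f) (i k : Fin n) :
    prR (dotR p (Wtf.mul (transl ν) (ofW σ)) (basePt n f)) j i k
      = ((((((σ j)⁻¹ k : Fin n) : ℤ) - (((σ j)⁻¹ i : Fin n) : ℤ))
          + (p : ℤ) * (ν j i - ν j k) : ℤ) : ℝ) := by
  simp [prR, dotR, Wtf.mul, transl, ofW, basePt, permAct, eta0]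
  push_cast
  ring

private lemma prZ_succ {n f : ℕ} (lam : Xf n f) (j : Fin f) (i : Fin n) (h : (i : ℕ) + 1 < n) :
    prZ lam j i ⟨(i : ℕ) + 1, h⟩ = lam j i - lam j ⟨(i : ℕ) + 1, h⟩ + 1 := by
  simp [prZ, eta0]
  push_cast
  ring

/-- let `μ` be n-deep in `C₀`, `s, σ ∈ Wf`, `ν ∈ Xf`, and
`μ' := σ(μ + η) + pν − σsπ(σ)⁻¹π(ν) − η`. If `μ' ∈ X₁`, then
`|⟨ν_j, α^∨⟩| ≤ n − 1` for all `j` and coroots, `μ'` lies in the p-alcove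
`(t_ν σ) · C₀`, and the p-alcove `(t_ν σ) · C₀` is p-restricted. -/
theorem statement16 (n f p : ℕ) (hn : 2 ≤ n) (hf : 1 ≤ f) (hp : p.Prime) (hnp : n < p)
    (μ : Xf n f) (hμ : deep p n μ) (s σ : WfG n f) (ν : Xf n f)
    (h1 : conjX p ν σ s (μ + etaf n f) - etaf n f ∈ X1 n f p) :
    (∀ (j : Fin f) (i k : Fin n), i ≠ k → |ν j i - ν j k| ≤ (n : ℤ) - 1) ∧
    sameAlcove p (toR (conjX p ν σ s (μ + etaf n f) - etaf n f))
      (dotR p (Wtf.mul (transl ν) (ofW σ)) (basePt n f)) ∧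
    restrictedPt p (dotR p (Wtf.mul (transl ν) (ofW σ)) (basePt n f)) := by
  have hp0 : (0 : ℤ) < (p : ℤ) := by exact_mod_cast hp.pos
  have hnp' : (n : ℤ) < (p : ℤ) := by exact_mod_cast hnp
  have hn' : (2 : ℤ) ≤ (n : ℤ) := by exact_mod_cast hn
  set μ' := conjX p ν σ s (μ + etaf n f) - etaf n f with hμ'def
  -- key formula for the pairings of μ'
  have hkey : ∀ (j : Fin f) (i k : Fin n), prZ μ' j i k
      = prZ μ j ((σ j)⁻¹ i) ((σ j)⁻¹ k) + (p : ℤ) * (ν j i - ν j k)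
        - (ν ((finRotate f)⁻¹ j) ((conjW σ s j)⁻¹ i)
            - ν ((finRotate f)⁻¹ j) ((conjW σ s j)⁻¹ k)) := by
    intro j i k
    simp only [hμ'def, prZ, conjX, permAct, sh, etaf, Pi.add_apply, Pi.sub_apply]
    ring
  -- consecutive bounds from X1
  have hcons : ∀ (j : Fin f) (i : Fin n) (h : (i : ℕ) + 1 < n),
      1 ≤ prZ μ' j i ⟨(i : ℕ) + 1, h⟩ ∧ prZ μ' j i ⟨(i : ℕ) + 1, h⟩ ≤ (p : ℤ) := by
    intro j i h
    have hx := h1 j i h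
    have hs := prZ_succ μ' j i h
    omega
  -- telescoped bounds
  have htel : ∀ (j : Fin f) (i k : Fin n), i < k →
      1 ≤ prZ μ' j i k ∧ prZ μ' j i k ≤ ((n : ℤ) - 1) * (p : ℤ) := by
    intro j i k hik
    have ht := telescope (p : ℤ) μ' j (fun i h => hcons j i h) i k hik
    have hik' : (i : ℕ) < (k : ℕ) := hik
    have hkn := k.isLt
    constructor
    · have : (1 : ℤ) ≤ ((k : ℕ) : ℤ) - ((i : ℕ) : ℤ) := by omega
      linarith [ht.1]
    · have h2 : ((k : ℕ) : ℤ) - ((i : ℕ) : ℤ) ≤ (n : ℤ) - 1 := by omega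
      have := mul_le_mul_of_nonneg_right h2 hp0.le
      linarith [ht.2]
  -- depth bounds on prZ μ
  have hAbnd : ∀ (j : Fin f) (a b : Fin n), a ≠ b →
      ((n : ℤ) + 1 ≤ prZ μ j a b ∧ prZ μ j a b ≤ (p : ℤ) - (n : ℤ) - 1) ∨
      (-((p : ℤ) - (n : ℤ) - 1) ≤ prZ μ j a b ∧ prZ μ j a b ≤ -((n : ℤ) + 1)) := by
    intro j a b hab
    have hanti : prZ μ j a b = -prZ μ j b a := by simp only [prZ]; ring
    rcases lt_or_gt_of_ne hab with h | h
    · left; have := hμ j a b h; omega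
    · right; have := hμ j b a h; omega
  -- the maximum of the differences
  haveI : Nonempty (Fin f) := ⟨⟨0, hf⟩⟩
  haveI : Nonempty (Fin n) := ⟨⟨0, by omega⟩⟩
  have hne : (Finset.univ : Finset (Fin f × Fin n × Fin n)).Nonempty := Finset.univ_nonempty
  set M := Finset.univ.sup' hne (fun q : Fin f × Fin n × Fin n => ν q.1 q.2.1 - ν q.1 q.2.2)
    with hMdef
  have hMle : ∀ (j : Fin f) (x y : Fin n), ν j x - ν j y ≤ M := by
    intro j x y
    rw [hMdef]
    exact Finset.le_sup' (fun q : Fin f × Fin n × Fin n => ν q.1 q.2.1 - ν q.1 q.2.2)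
      (Finset.mem_univ (j, x, y))
  have hM0 : (0 : ℤ) ≤ M := by
    have h0 := hMle (Classical.arbitrary (Fin f)) (Classical.arbitrary (Fin n))
      (Classical.arbitrary (Fin n))
    simpa using h0
  have hnn : (0 : ℤ) ≤ ((n : ℤ) - 1) * (p : ℤ) := mul_nonneg (by linarith) hp0.le
  -- upper bound on all p-scaled differences
  have hupper : ∀ (j : Fin f) (i k : Fin n),
      (p : ℤ) * (ν j i - ν j k) ≤ ((n : ℤ) - 1) * (p : ℤ) + ((p : ℤ) - n - 1) + M := by
    intro j i k
    rcases lt_trichotomy i k with h | h | h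
    · have hk := hkey j i k
      have ht := htel j i k h
      have ha : (σ j)⁻¹ i ≠ (σ j)⁻¹ k := by
        intro he
        exact absurd (by simpa using congrArg (σ j) he) (ne_of_lt h)
      have hA := hAbnd j _ _ ha
      have hB := hMle ((finRotate f)⁻¹ j) ((conjW σ s j)⁻¹ i) ((conjW σ s j)⁻¹ k)
      rcases hA with ⟨l, u⟩ | ⟨l, u⟩ <;> linarith [ht.2]
    · rw [h]; simp; linarith
    · have hk := hkey j k i
      have ht := htel j k i h
      have ha : (σ j)⁻¹ k ≠ (σ j)⁻¹ i := by
        intro he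
        exact absurd (by simpa using congrArg (σ j) he) (ne_of_lt h)
      have hA := hAbnd j _ _ ha
      have hB := hMle ((finRotate f)⁻¹ j) ((conjW σ s j)⁻¹ i) ((conjW σ s j)⁻¹ k)
      have hneg : (p : ℤ) * (ν j i - ν j k) = -((p : ℤ) * (ν j k - ν j i)) := by ring
      rcases hA with ⟨l, u⟩ | ⟨l, u⟩ <;> linarith [ht.1]
  have hM1 : M ≤ (n : ℤ) - 1 := by
    obtain ⟨q, -, hq⟩ := Finset.exists_mem_eq_sup' hne
      (fun q : Fin f × Fin n × Fin n => ν q.1 q.2.1 - ν q.1 q.2.2)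
    have hMq : M = ν q.1 q.2.1 - ν q.1 q.2.2 := hMdef.trans hq
    have hu := hupper q.1 q.2.1 q.2.2
    rw [← hMq] at hu
    by_contra hc
    push_neg at hc
    have h2 : ((p : ℤ) - 1) * (n : ℤ) ≤ ((p : ℤ) - 1) * M :=
      mul_le_mul_of_nonneg_left (by omega) (by linarith)
    linarith
  have hB : ∀ (j : Fin f) (x y : Fin n), |ν j x - ν j y| ≤ (n : ℤ) - 1 := by
    intro j x y
    rw [abs_le]
    constructor
    · linarith [hMle j y x]
    · linarith [hMle j x y]
  -- per-hyperplane data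
  have main : ∀ (j : Fin f) (i k : Fin n), i < k → ∃ u v : ℤ,
      prZ μ' j i k = (p : ℤ) * (ν j i - ν j k) + u ∧
      ((((σ j)⁻¹ k : Fin n) : ℤ) - (((σ j)⁻¹ i : Fin n) : ℤ)) = v ∧
      ((0 < u ∧ u < (p : ℤ) ∧ 0 < v ∧ v < (p : ℤ)) ∨
        (-(p : ℤ) < u ∧ u < 0 ∧ -(p : ℤ) < v ∧ v < 0)) := by
    intro j i k hik
    have hk := hkey j i k
    have ha : (σ j)⁻¹ i ≠ (σ j)⁻¹ k := by
      intro he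
      exact absurd (by simpa using congrArg (σ j) he) (ne_of_lt hik)
    have hBi := hB ((finRotate f)⁻¹ j) ((conjW σ s j)⁻¹ i) ((conjW σ s j)⁻¹ k)
    rw [abs_le] at hBi
    refine ⟨prZ μ j ((σ j)⁻¹ i) ((σ j)⁻¹ k)
        - (ν ((finRotate f)⁻¹ j) ((conjW σ s j)⁻¹ i)
            - ν ((finRotate f)⁻¹ j) ((conjW σ s j)⁻¹ k)), _, by linarith, rfl, ?_⟩
    have hvb := ((σ j)⁻¹ k).isLt
    have hva := ((σ j)⁻¹ i).isLt
    rcases lt_or_gt_of_ne ha with hab | hab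
    · left
      have hd := hμ j _ _ hab
      have hab' : (((σ j)⁻¹ i : Fin n) : ℕ) < (((σ j)⁻¹ k : Fin n) : ℕ) := hab
      refine ⟨by linarith [hd.1, hBi.2], by linarith [hd.2, hBi.1], by omega, by omega⟩
    · right
      have hd := hμ j _ _ hab
      have hanti : prZ μ j ((σ j)⁻¹ i) ((σ j)⁻¹ k)
          = -prZ μ j ((σ j)⁻¹ k) ((σ j)⁻¹ i) := by simp only [prZ]; ring
      have hab' : (((σ j)⁻¹ k : Fin n) : ℕ) < (((σ j)⁻¹ i : Fin n) : ℕ) := hab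
      refine ⟨by linarith [hd.2, hBi.1], by linarith [hd.1, hBi.2], by omega, by omega⟩
  refine ⟨fun j i k _ => hB j i k, ⟨?_, ?_, ?_⟩, ?_⟩
  · -- regular (toR μ')
    intro j i k m hik
    obtain ⟨u, v, hux, hvx, hcase⟩ := main j i k hik
    rw [prR_toR, hux]
    exact real_ne p _ m (int_ne (p : ℤ) u (ν j i - ν j k)
      (hcase.imp (fun h => ⟨h.1, h.2.1⟩) (fun h => ⟨h.1, h.2.1⟩)) m)
  · -- regular y
    intro j i k m hik
    obtain ⟨u, v, hux, hvx, hcase⟩ := main j i k hik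
    have hy : prR (dotR p (Wtf.mul (transl ν) (ofW σ)) (basePt n f)) j i k
        = (((p : ℤ) * (ν j i - ν j k) + v : ℤ) : ℝ) := by
      rw [prR_y]; congr 1; linarith
    rw [hy]
    exact real_ne p _ m (int_ne (p : ℤ) v (ν j i - ν j k)
      (hcase.imp (fun h => ⟨h.2.2.1, h.2.2.2⟩) (fun h => ⟨h.2.2.1, h.2.2.2⟩)) m)
  · -- same side of every hyperplane
    intro j i k m hik
    obtain ⟨u, v, hux, hvx, hcase⟩ := main j i k hik
    have hy : prR (dotR p (Wtf.mul (transl ν) (ofW σ)) (basePt n f)) j i k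
        = (((p : ℤ) * (ν j i - ν j k) + v : ℤ) : ℝ) := by
      rw [prR_y]; congr 1; linarith
    rw [prR_toR, hux, hy]
    exact real_lt_iff p _ _ m (int_iff (p : ℤ) u v (ν j i - ν j k) m hcase)
  · -- restrictedPt
    intro j i h
    have hik : i < (⟨(i : ℕ) + 1, h⟩ : Fin n) := by simp [Fin.lt_def]
    obtain ⟨u, v, hux, hvx, hcase⟩ := main j i ⟨(i : ℕ) + 1, h⟩ hik
    have hcc := hcons j i h
    rw [hux] at hcc
    have hy : prR (dotR p (Wtf.mul (transl ν) (ofW σ)) (basePt n f)) j i ⟨(i : ℕ) + 1, h⟩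
        = (((p : ℤ) * (ν j i - ν j ⟨(i : ℕ) + 1, h⟩) + v : ℤ) : ℝ) := by
      rw [prR_y]; congr 1; linarith
    rw [hy]
    set D := ν j i - ν j ⟨(i : ℕ) + 1, h⟩ with hD
    rcases hcase with ⟨h1', h2', h3', h4'⟩ | ⟨h1', h2', h3', h4'⟩
    · have l1 : (p : ℤ) * D < (p : ℤ) * 1 := by linarith [hcc.2]
      have l2 : (p : ℤ) * (-1) < (p : ℤ) * D := by linarith [hcc.1]
      have hD0 : D = 0 := by
        have := lt_of_mul_lt_mul_left l1 hp0.le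
        have := lt_of_mul_lt_mul_left l2 hp0.le
        omega
      rw [hD0]
      constructor
      · push_cast
        have : (0 : ℝ) < (v : ℝ) := by exact_mod_cast h3'
        linarith
      · push_cast
        have : (v : ℝ) < (p : ℝ) := by exact_mod_cast h4'
        linarith
    · have l1 : (p : ℤ) * D < (p : ℤ) * 2 := by linarith [hcc.2]
      have l2 : (p : ℤ) * 0 < (p : ℤ) * D := by linarith [hcc.1]
      have hD1 : D = 1 := by
        have := lt_of_mul_lt_mul_left l1 hp0.le
        have := lt_of_mul_lt_mul_left l2 hp0.le
        omega
      rw [hD1]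
      constructor
      · push_cast
        have : -(p : ℝ) < (v : ℝ) := by exact_mod_cast h3'
        linarith
      · push_cast
        have : (v : ℝ) < 0 := by exact_mod_cast h4'
        linarith

end LLLSerre
end
end

section
/- Let m > n be an integer. Suppose μ ∈ Xf lies in C₀ (i.e. 0 < ⟨μ_j + η₀, α^∨⟩ < p for all j and positive coroots α^∨), ν ∈ Xf satisfies |⟨ν_j, α^∨⟩| ≤ n − 1 for all j and all coroots α^∨, and there exist σ, w ∈ Wf and ν′ ∈ Xf such that σ(μ + ν + η) + pν′ − σ w π(σ)^{−1} π(ν′) − η is m-deep in C₀. Then μ is (m − n)-deep in C₀. -/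
/-!
Common setup: the extended affine Weyl group of `GL_n` (f-fold product), its dot
action on `(ℝ^n)^f`, p-alcoves, lengths, Bruhat orders (dominant and antidominant),
the up (↑) order, admissible sets, and the combinatorics of lowest alcove
presentations, following Le–Le Hung–Levin, "Weight elimination in Serre-type
conjectures".
-/

noncomputable section

/-!
Write `λ'` for the m-deep weight of the hypothesis. Expanding the definitions, for every `j`
and `a ≠ b`,
`⟨λ'_j + η₀, α_{σa,σb}^∨⟩ = ⟨μ_j + η₀, α_{ab}^∨⟩ + ⟨ν_j, α_{ab}^∨⟩ + p d_j − d'_j`,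
where `d_j` is a coroot pairing of `ν'_j` and `d'_j` one of `ν'_{j-1}`. All terms except
`p d_j − d'_j` are bounded by roughly `p`, so at a pair where the coroot pairings of `ν'`
are maximal, `(p − 1) max ≤ p d − d' < 2(p − 1)`: every such pairing lies in `{-1, 0, 1}`.
Then `⟨μ_j + η₀, α^∨⟩` differs from `±⟨λ'_j + η₀, α^∨⟩` or `p ± ⟨λ'_j + η₀, α^∨⟩` by at most
`n`, and only the sign patterns compatible with `0 < ⟨μ_j + η₀, α^∨⟩ < p` survive.
-/

namespace LLLSerre

lemma prZ_swap {n f : ℕ} (lam : Xf n f) (j : Fin f) (i k : Fin n) :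
    prZ lam j i k = -prZ lam j k i := by
  unfold prZ; ring

lemma deep.abs_prZ {n f p m : ℕ} {lam : Xf n f} (h : deep p m lam) (j : Fin f) {i k : Fin n}
    (hik : i ≠ k) : (m : ℤ) < |prZ lam j i k| ∧ |prZ lam j i k| < p - m := by
  rcases hik.lt_or_gt with hlt | hlt
  · obtain ⟨h₁, h₂⟩ := h j i k hlt
    rw [abs_of_pos (by omega)]
    exact ⟨h₁, h₂⟩
  · obtain ⟨h₁, h₂⟩ := h j k i hlt
    rw [prZ_swap, abs_neg, abs_of_pos (by omega)]
    exact ⟨h₁, h₂⟩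

lemma prZ_conjX_sub_etaf {n f : ℕ} (p : ℕ) (μ ν ν' : Xf n f) (σ w : WfG n f) (j : Fin f)
    (a b : Fin n) :
    prZ (conjX p ν' σ w (μ + ν + etaf n f) - etaf n f) j (σ j a) (σ j b) =
      prZ μ j a b + (ν j a - ν j b) + p * (ν' j (σ j a) - ν' j (σ j b)) -
        (sh ν' j ((conjW σ w j)⁻¹ (σ j a)) - sh ν' j ((conjW σ w j)⁻¹ (σ j b))) := by
  simp only [prZ, conjX, permAct, etaf, Pi.add_apply, Pi.sub_apply, Equiv.Perm.coe_inv,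
    Equiv.symm_apply_apply]
  ring

lemma le_one_of_mul_sub_comp_lt {ι : Type*} [Finite ι] {D : ι → ℤ} (τ : ι → ι) {p : ℤ}
    (hp : 1 < p) (h : ∀ x, p * D x - D (τ x) < 2 * (p - 1)) (x : ι) : D x ≤ 1 := by
  have : Nonempty ι := ⟨x⟩
  obtain ⟨x₀, hmax⟩ := Finite.exists_max D
  have hx₀ : (p - 1) * D x₀ < (p - 1) * 2 := by linarith [h x₀, hmax (τ x₀)]
  linarith [lt_of_mul_lt_mul_left hx₀ (by omega : 0 ≤ p - 1), hmax x]

lemma mul_sub_lt_of_eq_add_mul_sub {n m : ℕ} {p x y e d d' : ℤ} (hnm : n < m)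
    (hy : y = x + e + p * d - d') (hx : |x| < p) (he : |e| ≤ n - 1) (hyd : |y| < p - m) :
    p * d - d' < 2 * (p - 1) := by
  rw [abs_lt] at hx hyd
  rw [abs_le] at he
  omega

lemma sub_lt_and_lt_sub_of_eq_add_mul_sub {n m : ℕ} {p x y e d d' : ℤ} (hnm : n < m)
    (hy : y = x + e + p * d - d') (hx : 0 < x ∧ x < p) (he : |e| ≤ n - 1) (hd : |d| ≤ 1)
    (hd' : |d'| ≤ 1) (hyd : (m : ℤ) < |y| ∧ |y| < p - m) :
    (m - n : ℤ) < x ∧ x < p - (m - n) := by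
  rw [abs_le] at he hd hd'
  obtain ⟨hy₁, hy₂⟩ := hyd
  rw [lt_abs] at hy₁
  rw [abs_lt] at hy₂
  obtain rfl | rfl | rfl : d = -1 ∨ d = 0 ∨ d = 1 := by omega
  all_goals simp only [mul_neg, mul_one, mul_zero] at hy; omega

lemma abs_sub_le_one_of_deep_conjX {n f p m : ℕ} (hp : 1 < (p : ℤ)) (hm : n < m)
    {μ ν ν' : Xf n f} {σ w : WfG n f} (hμ : deep p 0 μ)
    (hν : ∀ (j : Fin f) (i k : Fin n), i ≠ k → |ν j i - ν j k| ≤ (n : ℤ) - 1)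
    (h : deep p m (conjX p ν' σ w (μ + ν + etaf n f) - etaf n f)) (j : Fin f) (i k : Fin n) :
    |ν' j i - ν' j k| ≤ 1 := by
  have hle : ∀ j i k, ν' j i - ν' j k ≤ 1 := fun j i k => by
    refine le_one_of_mul_sub_comp_lt
      (D := fun x : Fin f × Fin n × Fin n => ν' x.1 x.2.1 - ν' x.1 x.2.2)
      (fun x => ((finRotate f)⁻¹ x.1, (conjW σ w x.1)⁻¹ x.2.1, (conjW σ w x.1)⁻¹ x.2.2))
      hp (fun ⟨j, i, k⟩ => ?_) (j, i, k)
    obtain ⟨a, rfl⟩ := (σ j).surjective i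
    obtain ⟨b, rfl⟩ := (σ j).surjective k
    rcases eq_or_ne a b with rfl | hab
    · simpa using hp
    · exact mul_sub_lt_of_eq_add_mul_sub hm (prZ_conjX_sub_etaf p μ ν ν' σ w j a b)
        (by simpa using (hμ.abs_prZ j hab).2) (hν j a b hab)
        (h.abs_prZ j ((σ j).injective.ne hab)).2
  exact abs_le.mpr ⟨by linarith [hle j k i], hle j i k⟩

theorem statement17_general (n f p : ℕ)
    (m : ℕ) (hm : n < m) (μ ν : Xf n f)
    (hμ : deep p 0 μ)
    (hν : ∀ (j : Fin f) (i k : Fin n), i ≠ k → |ν j i - ν j k| ≤ (n : ℤ) - 1)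
    (σ w : WfG n f) (ν' : Xf n f)
    (h : deep p m (conjX p ν' σ w (μ + ν + etaf n f) - etaf n f)) :
    deep p (m - n) μ := by
  intro j a b hab
  have hμab := hμ j a b hab
  push_cast at hμab
  have hp : 1 < (p : ℤ) := by omega
  rw [Nat.cast_sub hm.le]
  exact sub_lt_and_lt_sub_of_eq_add_mul_sub hm (prZ_conjX_sub_etaf p μ ν ν' σ w j a b) hμab
    (hν j a b hab.ne) (abs_sub_le_one_of_deep_conjX hp hm hμ hν h _ _ _)
    (abs_sub_le_one_of_deep_conjX hp hm hμ hν h _ _ _) (h.abs_prZ j ((σ j).injective.ne hab.ne))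

/-- let `m > n`. If `μ` lies in `C₀`, `|⟨ν_j, α^∨⟩| ≤ n − 1` for all
`j` and coroots, and `σ(μ + ν + η) + pν' − σwπ(σ)⁻¹π(ν') − η` is m-deep in `C₀`
for some `σ, w ∈ Wf` and `ν' ∈ Xf`, then `μ` is (m − n)-deep in `C₀`. -/
theorem statement17 (n f p : ℕ) (hn : 2 ≤ n) (hf : 1 ≤ f) (hp : p.Prime) (hnp : n < p)
    (m : ℕ) (hm : n < m) (μ ν : Xf n f)
    (hμ : deep p 0 μ)
    (hν : ∀ (j : Fin f) (i k : Fin n), i ≠ k → |ν j i - ν j k| ≤ (n : ℤ) - 1)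
    (σ w : WfG n f) (ν' : Xf n f)
    (h : deep p m (conjX p ν' σ w (μ + ν + etaf n f) - etaf n f)) :
    deep p (m - n) μ :=
  statement17_general n f p m hm μ ν hμ hν σ w ν' h

end LLLSerre
end
end
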